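/- arXiv:0909.5512 — 5 statements merged into one kernel-verified Lean document; each statement's English description precedes it below -/
import Mathlib

section
/- For every natural number n, the central Delannoy number d_{n,n} = sum_{k=0}^n binom(2n-k,k)*binom(2n-2k,n-k) equals P_n(3), where P_n is the n-th Legendre polynomial given by P_n(x) = sum_{j=0}^n binom(n+j,j)*binom(n,n-j)*((x-1)/2)^j. -/
/-!
Substituting `k ↦ n - k` turns the Delannoy summand into `C(n+k, 2k) C(2k, k)`, which by
trinomial revision is `C(n+k, k) C(n, k)`. At `x = 3` we have `(x - 1) / 2 = 1`, and the
Legendre sum is exactly `∑ C(n+k, k) C(n, n-k)`.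
-/

open Finset

theorem Nat.choose_add_two_mul_mul_choose (n k : ℕ) :
    (n + k).choose (2 * k) * (2 * k).choose k = (n + k).choose k * n.choose k := by
  rw [Nat.choose_mul (by omega), Nat.add_sub_cancel, show 2 * k - k = k by omega]

theorem sum_central_delannoy_eq (n : ℕ) :
    ∑ k ∈ range (n + 1), (2 * n - k).choose k * (2 * n - 2 * k).choose (n - k) =
      ∑ k ∈ range (n + 1), (n + k).choose k * n.choose k := by
  rw [← sum_range_reflect]
  refine sum_congr rfl fun k hk => ?_
  have hkn : k ≤ n := Nat.lt_succ_iff.mp (mem_range.mp hk)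
  rw [show 2 * n - (n + 1 - 1 - k) = n + k by omega, show n + 1 - 1 - k = n - k by omega,
    show 2 * n - 2 * (n - k) = 2 * k by omega, Nat.sub_sub_self hkn,
    Nat.choose_symm_of_eq_add (show n + k = n - k + 2 * k by omega),
    Nat.choose_add_two_mul_mul_choose]

/-- the central Delannoy number
`d_{n,n} = ∑_{k=0}^n choose (2n-k) k * choose (2n-2k) (n-k)` equals `P_n(3)`, where
`P_n(x) = ∑_{j=0}^n choose (n+j) j * choose n (n-j) * ((x-1)/2)^j` is the Legendre
polynomial. -/
theorem central_delannoy_eq_legendre_at_three (n : ℕ) :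
    ((∑ k ∈ Finset.range (n + 1),
        (2 * n - k).choose k * (2 * n - 2 * k).choose (n - k) : ℕ) : ℚ) =
      ∑ j ∈ Finset.range (n + 1),
        ((n + j).choose j * n.choose (n - j) : ℚ) * (((3 : ℚ) - 1) / 2) ^ j := by
  have half_of_three_sub_one : ((3 : ℚ) - 1) / 2 = 1 := by norm_num
  rw [sum_central_delannoy_eq, half_of_three_sub_one]
  push_cast
  refine sum_congr rfl fun j hj => ?_
  rw [one_pow, mul_one, Nat.choose_symm (Nat.lt_succ_iff.mp (mem_range.mp hj))]
end

section
/- For natural numbers n and alpha, and any complex beta, (x-1)^alpha * P_n^{(alpha,beta)}(2x-1) = sum_{k=0}^{n+alpha} (-1)^(n+alpha-k) * binom(n+alpha,k) * binom(n+beta+k,n) * x^k, where P_n^{(alpha,beta)}(y) = sum_{j=0}^n binom(n+alpha+beta+j,j) * binom(n+alpha,n-j) * ((y-1)/2)^j and binom(n+beta+k,n) denotes the generalized binomial coefficient (beta+k+1)(beta+k+2)...(beta+k+n)/n!. -/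
/-- Generalized binomial coefficient `choose z k = z(z-1)⋯(z-k+1)/k!` for complex `z`. -/
noncomputable def cchoose (z : ℂ) (k : ℕ) : ℂ :=
  (∏ i ∈ Finset.range k, (z - i)) / (k.factorial : ℂ)

/-! Put `z = n + β`. Both sides equal
`∑ s ≤ n, choose z s * choose (n + α) (n - s) * x ^ (n - s) * (x - 1) ^ (α + s)`.
On the left, Chu–Vandermonde splits `choose (z + α + j) j` over `choose z s`, and after
exchanging the sums the remaining sum over `j` is the binomial expansion of
`x ^ (n - s) = ((x - 1) + 1) ^ (n - s)`. On the right, Chu–Vandermonde splits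
`choose (z + k) n` the same way, and with `m = n + α`, `r = n - s` the remaining sum over `k` is
`∑ k, (-1) ^ (m - k) * choose m k * choose k r * x ^ k = choose m r * x ^ r * (x - 1) ^ (m - r)`. -/

open Finset

namespace Ring

variable {R : Type*} [CommRing R] [BinomialRing R]

theorem choose_add_eq_sum_range (r s : R) (k : ℕ) :
    choose (r + s) k = ∑ i ∈ range (k + 1), choose r i * choose s (k - i) := by
  rw [add_choose_eq k (Commute.all r s), Nat.sum_antidiagonal_eq_sum_range_succ_mk]

theorem choose_add_natCast_mul_choose_eq_sum (z : R) {n j : ℕ} (α : ℕ) (hj : j ≤ n) :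
    choose (z + (α + j : ℕ)) j * (n + α).choose (n - j) =
      ∑ s ∈ range (n + 1), choose z s * ((n + α).choose (n - s) * (n - s).choose (n - j)) := by
  have hvanish : ∀ s ∈ range (n + 1), s ∉ range (j + 1) →
      choose z s * ((n + α).choose (n - s) * (n - s).choose (n - j) : R) = 0 := by
    intro s hsn hsj
    rw [Nat.choose_eq_zero_of_lt (n := n - s) (by simp only [mem_range] at hsn hsj; omega)]
    simp
  rw [← sum_subset (range_subset_range.mpr (Nat.succ_le_succ hj)) hvanish, choose_add_eq_sum_range,
    sum_mul]
  refine sum_congr rfl fun s hs => ?_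
  have hsj := Nat.lt_succ_iff.mp (mem_range.mp hs)
  have hchoose := Nat.choose_mul (n := n + α) (k := n - s) (s := n - j) (by omega)
  rw [show n + α - (n - j) = α + j by omega, show n - s - (n - j) = j - s by omega] at hchoose
  rw [choose_natCast, mul_assoc, ← Nat.cast_mul, ← Nat.cast_mul, hchoose, Nat.mul_comm]

end Ring

theorem cchoose_eq_choose (z : ℂ) (k : ℕ) : cchoose z k = Ring.choose z k := by
  rw [Ring.choose_eq_smul, cchoose, ← Polynomial.aeval_eq_smeval, Polynomial.aeval_def,
    ← Polynomial.eval_map, descPochhammer_map, descPochhammer_eval_eq_prod_range, smul_eq_mul,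
    div_eq_inv_mul]

theorem sum_neg_one_pow_mul_choose_mul_choose_mul_pow {R : Type*} [CommRing R]
    {m r : ℕ} (hr : r ≤ m) (x : R) :
    ∑ k ∈ range (m + 1), (-1) ^ (m - k) * (m.choose k : R) * (k.choose r : R) * x ^ k =
      m.choose r * x ^ r * (x - 1) ^ (m - r) := by
  obtain ⟨d, rfl⟩ := Nat.exists_eq_add_of_le hr
  have hlow : ∀ k ∈ range r,
      (-1) ^ (r + d - k) * ((r + d).choose k : R) * (k.choose r : R) * x ^ k = 0 := by
    intro k hk
    rw [Nat.choose_eq_zero_of_lt (mem_range.mp hk)]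
    simp
  have hchoose (t : ℕ) :
      ((r + d).choose (r + t) : R) * (r + t).choose r = (r + d).choose r * d.choose t := by
    have := Nat.choose_mul (n := r + d) (Nat.le_add_right r t)
    simp only [Nat.add_sub_cancel_left] at this
    rw [← Nat.cast_mul, ← Nat.cast_mul, this]
  rw [add_assoc, sum_range_add, sum_eq_zero hlow, zero_add, Nat.add_sub_cancel_left,
    sub_eq_add_neg, add_pow, mul_sum]
  refine sum_congr rfl fun t _ => ?_
  rw [Nat.add_sub_add_left, pow_add]
  linear_combination (-1) ^ (d - t) * x ^ r * x ^ t * hchoose t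

theorem sum_choose_sub_mul_pow {R : Type*} [CommSemiring R] {n s : ℕ} (hs : s ≤ n) (y : R) :
    ∑ j ∈ range (n + 1), ((n - s).choose (n - j) : R) * y ^ j = y ^ s * (y + 1) ^ (n - s) := by
  obtain ⟨d, rfl⟩ := Nat.exists_eq_add_of_le hs
  have hlow : ∀ j ∈ range s, ((s + d - s).choose (s + d - j) : R) * y ^ j = 0 := by
    intro j hj
    rw [Nat.choose_eq_zero_of_lt (by have := mem_range.mp hj; omega)]
    simp
  rw [add_assoc, sum_range_add, sum_eq_zero hlow, zero_add, Nat.add_sub_cancel_left, add_pow,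
    mul_sum]
  refine sum_congr rfl fun t ht => ?_
  rw [Nat.add_sub_add_left, Nat.choose_symm (Nat.lt_succ_iff.mp (mem_range.mp ht)), pow_add]
  ring

section JacobiExpansion

variable {R : Type*} [CommRing R] [BinomialRing R] (z x : R) (n α : ℕ)

theorem pow_mul_sum_choose_add_mul_choose_mul_pow :
    (x - 1) ^ α * ∑ j ∈ range (n + 1),
        Ring.choose (z + (α + j : ℕ)) j * (n + α).choose (n - j) * (x - 1) ^ j =
      ∑ s ∈ range (n + 1),
        Ring.choose z s * (n + α).choose (n - s) * x ^ (n - s) * (x - 1) ^ (α + s) := by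
  calc
    _ = ∑ j ∈ range (n + 1), ∑ s ∈ range (n + 1), Ring.choose z s * (n + α).choose (n - s) *
          ((x - 1) ^ α * ((n - s).choose (n - j) * (x - 1) ^ j)) := by
      rw [mul_sum]
      refine sum_congr rfl fun j hj => ?_
      rw [Ring.choose_add_natCast_mul_choose_eq_sum z α (Nat.lt_succ_iff.mp (mem_range.mp hj)),
        sum_mul, mul_sum]
      exact sum_congr rfl fun s _ => by ring
    _ = ∑ s ∈ range (n + 1), Ring.choose z s * (n + α).choose (n - s) *
          ((x - 1) ^ α * ∑ j ∈ range (n + 1), (n - s).choose (n - j) * (x - 1) ^ j) := by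
      rw [sum_comm]
      simp only [mul_sum]
    _ = _ := by
      refine sum_congr rfl fun s hs => ?_
      rw [sum_choose_sub_mul_pow (Nat.lt_succ_iff.mp (mem_range.mp hs)), sub_add_cancel]
      ring

theorem sum_neg_one_pow_mul_choose_mul_choose_add_mul_pow :
    ∑ k ∈ range (n + α + 1), (-1) ^ (n + α - k) * ((n + α).choose k : R) *
        Ring.choose (z + k) n * x ^ k =
      ∑ s ∈ range (n + 1),
        Ring.choose z s * (n + α).choose (n - s) * x ^ (n - s) * (x - 1) ^ (α + s) := by
  simp_rw [Ring.choose_add_eq_sum_range, Ring.choose_natCast, mul_sum, sum_mul]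
  rw [sum_comm]
  refine sum_congr rfl fun s hs => ?_
  have hsn := Nat.lt_succ_iff.mp (mem_range.mp hs)
  have hexpand := sum_neg_one_pow_mul_choose_mul_choose_mul_pow (m := n + α) (r := n - s)
    (by omega) x
  rw [show n + α - (n - s) = α + s by omega] at hexpand
  rw [mul_assoc (Ring.choose z s), mul_assoc (Ring.choose z s), ← hexpand, mul_sum]
  exact sum_congr rfl fun k _ => by ring

end JacobiExpansion

/-- for natural `n`, `α` and complex `β`,
`(x-1)^α * P_n^{(α,β)}(2x-1) = ∑_{k=0}^{n+α} (-1)^(n+α-k) choose (n+α) k *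
choose (n+β+k) n * x^k`, where
`P_n^{(α,β)}(y) = ∑_{j=0}^n choose (n+α+β+j) j * choose (n+α) (n-j) * ((y-1)/2)^j`
with generalized binomial coefficients for the complex top arguments. -/
theorem shifted_jacobi_formula (n α : ℕ) (β x : ℂ) :
    (x - 1) ^ α *
      (∑ j ∈ Finset.range (n + 1),
        cchoose ((n : ℂ) + α + β + j) j * ((n + α).choose (n - j) : ℂ) *
          (((2 * x - 1) - 1) / 2) ^ j) =
      ∑ k ∈ Finset.range (n + α + 1),
        (-1) ^ (n + α - k) * ((n + α).choose k : ℂ) *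
          cchoose ((n : ℂ) + β + k) n * x ^ k := by
  have hcast_left (j : ℕ) : (n : ℂ) + α + β + j = (n + β) + ((α + j : ℕ) : ℂ) := by push_cast; ring
  have hhalf : ((2 * x - 1) - 1) / 2 = x - 1 := by ring
  simp_rw [cchoose_eq_choose, hcast_left, hhalf]
  rw [pow_mul_sum_choose_add_mul_choose_mul_pow, sum_neg_one_pow_mul_choose_mul_choose_add_mul_pow]
end

section
/- For natural numbers m, n, beta with m < n, the alternating sum sum_{k=0}^n (-1)^k * binom(n+beta,k) * binom(n,k) * k! * (n+m+beta-k)! equals zero. -/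
/-!
For `k ≤ n + β`, the summand factors as `(n + β)! * (-1)^k * choose n k * (n + β + m - k)^{(m)}`,
with `x^{(m)}` the falling factorial. As a function of `k` the falling factorial is a polynomial
of degree `m`, and the alternating binomial sum of length `n` is (up to sign) the `n`-th forward
difference at `0`, which annihilates every polynomial of degree `< n`.
-/

open Finset Polynomial

theorem Polynomial.sum_range_neg_one_pow_mul_choose_mul_eval_eq_zero {R : Type*} [CommRing R]
    {P : R[X]} {n : ℕ} (hP : P.natDegree < n) :
    ∑ k ∈ range (n + 1), (-1 : R) ^ k * n.choose k * P.eval (k : R) = 0 := by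
  have hΔ := fwdDiff_iter_eq_sum_shift 1 P.eval n 0
  rw [fwdDiff_iter_eq_zero_of_degree_lt hP, Pi.zero_apply] at hΔ
  calc ∑ k ∈ range (n + 1), (-1 : R) ^ k * n.choose k * P.eval (k : R)
      = (-1) ^ n * ∑ k ∈ range (n + 1),
          ((-1 : ℤ) ^ (n - k) * n.choose k) • P.eval (0 + k • 1) := by
        rw [mul_sum]
        refine sum_congr rfl fun k hk => ?_
        have hsign : (-1 : R) ^ k = (-1) ^ n * (-1) ^ (n - k) := by
          rw [← pow_add, show n + (n - k) = k + 2 * (n - k) by grind, pow_add, pow_mul,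
            neg_one_sq, one_pow, mul_one]
        simp [hsign, zsmul_eq_mul, mul_assoc]
    _ = 0 := by rw [← hΔ, mul_zero]

theorem sum_range_neg_one_pow_mul_choose_mul_descFactorial_eq_zero {m n N : ℕ}
    (h : m < n) (hN : n ≤ N) :
    ∑ k ∈ range (n + 1), (-1 : ℤ) ^ k * n.choose k * (N - k).descFactorial m = 0 := by
  set P : ℤ[X] := (descPochhammer ℤ m).comp (C (N : ℤ) - X)
  have hP : P.natDegree < n := by
    refine lt_of_le_of_lt ?_ h
    calc P.natDegree ≤ (descPochhammer ℤ m).natDegree * (C (N : ℤ) - X).natDegree :=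
          natDegree_comp_le
      _ ≤ m * 1 := by rw [descPochhammer_natDegree]; gcongr; compute_degree
      _ = m := mul_one m
  rw [← P.sum_range_neg_one_pow_mul_choose_mul_eval_eq_zero hP]
  refine sum_congr rfl fun k hk => ?_
  have hkN : k ≤ N := (Nat.lt_succ_iff.mp (mem_range.mp hk)).trans hN
  rw [eval_comp, eval_sub, eval_C, eval_X, ← Nat.cast_sub hkN,
    descPochhammer_eval_eq_descFactorial]

theorem Nat.choose_mul_factorial_mul_factorial_add_sub {N k : ℕ} (m : ℕ) (hk : k ≤ N) :
    N.choose k * k.factorial * (N + m - k).factorial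
      = N.factorial * (N + m - k).descFactorial m := by
  have hfac : (N + m - k).factorial = (N - k).factorial * (N + m - k).descFactorial m := by
    rw [← Nat.factorial_mul_descFactorial (by omega : m ≤ N + m - k),
      show N + m - k - m = N - k by omega]
  rw [hfac, ← mul_assoc, Nat.choose_mul_factorial_mul_factorial hk]

/-- for natural numbers `m < n` and `β`,
`∑_{k=0}^n (-1)^k * choose (n+β) k * choose n k * k! * (n+m+β-k)! = 0`. -/
theorem orthogonality_alternating_sum (m n β : ℕ) (h : m < n) :
    (∑ k ∈ Finset.range (n + 1),
        (-1 : ℤ) ^ k * ((n + β).choose k : ℤ) * (n.choose k : ℤ) *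
          (k.factorial : ℤ) * ((n + m + β - k).factorial : ℤ)) = 0 := by
  have hterm : ∀ k ∈ range (n + 1),
      (-1 : ℤ) ^ k * ((n + β).choose k : ℤ) * (n.choose k : ℤ) *
          (k.factorial : ℤ) * ((n + m + β - k).factorial : ℤ)
        = (n + β).factorial * ((-1) ^ k * n.choose k * (n + β + m - k).descFactorial m) := by
    intro k hk
    have hfac := congrArg (Nat.cast : ℕ → ℤ) <| Nat.choose_mul_factorial_mul_factorial_add_sub m
      ((Nat.lt_succ_iff.mp (mem_range.mp hk)).trans (n.le_add_right β))
    push_cast at hfac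
    rw [show n + m + β = n + β + m by ring]
    linear_combination ((-1) ^ k * n.choose k : ℤ) * hfac
  rw [sum_congr rfl hterm, ← mul_sum,
    sum_range_neg_one_pow_mul_choose_mul_descFactorial_eq_zero h (by omega), mul_zero]
end

section
/- For natural numbers m, n, beta with m < n, the equality (n+m+beta+1)! * integral from 0 to 1 of x^(m+beta) * P_n^{(0,beta)}(2x-1) dx = sum_{k=0}^n (-1)^k * binom(n+beta,k) * binom(n,k) * k! * (n+m+beta-k)! holds; in particular the integral vanishes for m < n. -/
/-!
Both sides vanish. Integrating termwise, the moment is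
`∑ (-1)^(n-k) C(n,k) C(n+β+k,n) / (k+m+β+1)`, and `n! C(n+β+k,n) = (k+β+1)⋯(k+β+n)`
contains the factor `k+β+m+1` because `m < n`; so the summand is `(-1)^(n-k) C(n,k)` times
a polynomial of degree `n-1` in `k`, which the `n`-th finite difference annihilates.
Likewise `C(n+β,k) k! (n+m+β-k)! = (n+β)! (n+β-k+1)⋯(n+β-k+m)` is a polynomial of
degree `m < n` in `k`.
-/

open Finset Polynomial Nat

namespace Polynomial

theorem sum_neg_one_pow_sub_mul_choose_mul_eval_eq_zero {R : Type*} [CommRing R] {P : R[X]}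
    {n : ℕ} (hP : P.natDegree < n) :
    ∑ k ∈ range (n + 1), (-1 : R) ^ (n - k) * n.choose k * P.eval (k : R) = 0 := by
  have h := fwdDiff_iter_eq_sum_shift 1 P.eval n 0
  rw [fwdDiff_iter_eq_zero_of_degree_lt hP] at h
  simpa [zsmul_eq_mul] using h.symm

theorem sum_neg_one_pow_mul_choose_mul_eval_eq_zero {R : Type*} [CommRing R] {P : R[X]}
    {n : ℕ} (hP : P.natDegree < n) :
    ∑ k ∈ range (n + 1), (-1 : R) ^ k * n.choose k * P.eval (k : R) = 0 := by
  have hsign : ∀ k ∈ range (n + 1), (-1 : R) ^ k = (-1) ^ n * (-1) ^ (n - k) := fun k hk => by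
    obtain ⟨j, rfl⟩ := Nat.exists_eq_add_of_le (mem_range_succ_iff.mp hk)
    rw [Nat.add_sub_cancel_left, pow_add, mul_assoc, ← pow_add, ← two_mul, pow_mul, neg_one_sq,
      one_pow, mul_one]
  rw [sum_congr rfl fun k hk => by rw [hsign k hk], ← mul_zero ((-1 : R) ^ n),
    ← sum_neg_one_pow_sub_mul_choose_mul_eval_eq_zero hP, mul_sum]
  simp only [mul_assoc]

theorem sum_neg_one_pow_sub_mul_choose_mul_eval_div_eq_zero {K : Type*} [Field K] {P : K[X]}
    {n : ℕ} {a : K} (hn : 0 < n) (hP : P.natDegree ≤ n) (ha : P.IsRoot a)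
    (hk : ∀ k ≤ n, (k : K) ≠ a) :
    ∑ k ∈ range (n + 1), (-1 : K) ^ (n - k) * n.choose k * (P.eval (k : K) / (k - a)) = 0 := by
  set Q := P /ₘ (X - C a)
  have hQ : (X - C a) * Q = P := mul_divByMonic_eq_iff_isRoot.mpr ha
  have hQdeg : Q.natDegree < n := by
    rw [natDegree_divByMonic _ (monic_X_sub_C a), natDegree_X_sub_C]
    omega
  rw [← sum_neg_one_pow_sub_mul_choose_mul_eval_eq_zero hQdeg]
  refine sum_congr rfl fun k hk' => ?_
  rw [← hQ, eval_mul, eval_sub, eval_X, eval_C,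
    mul_div_cancel_left₀ _ (sub_ne_zero.mpr (hk k (mem_range_succ_iff.mp hk')))]

end Polynomial

theorem integral_pow_mul_sum_mul_pow (j : ℕ) (s : Finset ℕ) (c : ℕ → ℝ) :
    ∫ x in (0 : ℝ)..1, x ^ j * ∑ k ∈ s, c k * x ^ k = ∑ k ∈ s, c k / (j + k + 1) := by
  simp_rw [mul_sum, mul_left_comm _ (c _), ← pow_add]
  rw [intervalIntegral.integral_finsetSum fun k _ =>
    (by fun_prop : Continuous _).intervalIntegrable _ _]
  refine sum_congr rfl fun k _ => ?_
  simp [integral_pow, div_eq_mul_inv, add_assoc]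

theorem Nat.choose_mul_factorial_mul_factorial_sub_add {N k : ℕ} (hk : k ≤ N) (m : ℕ) :
    N.choose k * k ! * (N - k + m)! = N ! * (N - k + 1).ascFactorial m := by
  apply Nat.eq_of_mul_eq_mul_left (factorial_pos (N - k))
  rw [← factorial_mul_ascFactorial, ← factorial_mul_descFactorial hk,
    descFactorial_eq_factorial_mul_choose]
  ring

theorem Nat.cast_factorial_mul_choose_eq_eval_ascPochhammer {K : Type*} [CommSemiring K]
    (n b k : ℕ) :
    (n ! : K) * (n + b + k).choose n =
      ((ascPochhammer K n).comp (X + C (b + 1 : K))).eval (k : K) := by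
  rw [eval_comp, eval_add, eval_X, eval_C, ← Nat.cast_mul, show n + b + k = b + k + n by ring,
    ← ascFactorial_eq_factorial_mul_choose, cast_ascFactorial]
  push_cast
  ring_nf

theorem Nat.cast_choose_mul_factorial_mul_factorial_eq_eval_ascPochhammer {K : Type*} [CommRing K]
    {N k : ℕ} (hk : k ≤ N) (m : ℕ) :
    (N.choose k * k ! * (N - k + m)! : K) =
      (C (N ! : K) * (ascPochhammer K m).comp (C (N + 1 : K) - X)).eval (k : K) := by
  rw [← Nat.cast_mul, ← Nat.cast_mul, choose_mul_factorial_mul_factorial_sub_add hk,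
    Nat.cast_mul, cast_ascFactorial, eval_mul, eval_C, eval_comp]
  simp [Nat.cast_sub hk, sub_add_eq_add_sub]

theorem integral_pow_mul_shiftedJacobi_eq_zero {m n : ℕ} (β : ℕ) (h : m < n) :
    ∫ x in (0 : ℝ)..1, x ^ (m + β) * (∑ k ∈ range (n + 1),
      (-1 : ℝ) ^ (n - k) * (n.choose k : ℝ) * ((n + β + k).choose n : ℝ) * x ^ k) = 0 := by
  set A : ℝ[X] := (ascPochhammer ℝ n).comp (X + C (β + 1 : ℝ))
  have hA : A.IsRoot (-(β + m + 1)) := by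
    rw [IsRoot.def, eval_comp, eval_add, eval_X, eval_C,
      show -(β + m + 1 : ℝ) + (β + 1) = -m by ring]
    exact ascPochhammer_eval_neg_coe_nat_of_lt h
  have hAdeg : A.natDegree ≤ n := by
    rw [natDegree_comp, ascPochhammer_natDegree, natDegree_X_add_C, mul_one]
  have hk : ∀ k ≤ n, (k : ℝ) ≠ -(β + m + 1) := fun k _ =>
    ((neg_neg_of_pos (by positivity)).trans_le k.cast_nonneg).ne'
  rw [integral_pow_mul_sum_mul_pow, ← mul_zero (n ! : ℝ)⁻¹,
    ← sum_neg_one_pow_sub_mul_choose_mul_eval_div_eq_zero (by omega) hAdeg hA hk, mul_sum]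
  refine sum_congr rfl fun k _ => ?_
  rw [← Nat.cast_factorial_mul_choose_eq_eval_ascPochhammer,
    show (k : ℝ) - -(β + m + 1) = ↑(m + β) + k + 1 by push_cast; ring]
  field_simp

theorem sum_neg_one_pow_mul_choose_mul_factorial_mul_factorial_eq_zero {m n : ℕ} (β : ℕ)
    (h : m < n) :
    ∑ k ∈ range (n + 1), (-1 : ℝ) ^ k * ((n + β).choose k : ℝ) * (n.choose k : ℝ) *
      (k ! : ℝ) * ((n + m + β - k)! : ℝ) = 0 := by
  set B : ℝ[X] := C ((n + β)! : ℝ) * (ascPochhammer ℝ m).comp (C (↑(n + β) + 1 : ℝ) - X)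
  have hBdeg : B.natDegree < n := by
    refine (natDegree_C_mul_le _ _).trans_lt ?_
    rw [natDegree_comp, ascPochhammer_natDegree, natDegree_sub_eq_right_of_natDegree_lt,
      natDegree_X, mul_one]
    · exact h
    · rw [natDegree_C, natDegree_X]; exact one_pos
  rw [← sum_neg_one_pow_mul_choose_mul_eval_eq_zero hBdeg]
  refine sum_congr rfl fun k hk => ?_
  have hkN : k ≤ n + β := by have := mem_range_succ_iff.mp hk; omega
  rw [← Nat.cast_choose_mul_factorial_mul_factorial_eq_eval_ascPochhammer hkN,
    show n + β - k + m = n + m + β - k by omega]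
  ring

/-- for natural numbers `m < n` and `β`,
`(n+m+β+1)! * ∫_0^1 x^(m+β) * P_n^{(0,β)}(2x-1) dx
  = ∑_{k=0}^n (-1)^k choose (n+β) k * choose n k * k! * (n+m+β-k)!`,
and in particular the integral vanishes. Here
`P_n^{(0,β)}(2x-1) = ∑_{k=0}^n (-1)^(n-k) choose n k * choose (n+β+k) n * x^k`. -/
theorem jacobi_moment_integral (m n β : ℕ) (h : m < n) :
    (((n + m + β + 1).factorial : ℝ) *
        ∫ x in (0 : ℝ)..1, x ^ (m + β) *
          (∑ k ∈ Finset.range (n + 1),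
            (-1 : ℝ) ^ (n - k) * (n.choose k : ℝ) * ((n + β + k).choose n : ℝ) * x ^ k)) =
      (∑ k ∈ Finset.range (n + 1),
        (-1 : ℝ) ^ k * ((n + β).choose k : ℝ) * (n.choose k : ℝ) *
          (k.factorial : ℝ) * ((n + m + β - k).factorial : ℝ)) ∧
    (∫ x in (0 : ℝ)..1, x ^ (m + β) *
        (∑ k ∈ Finset.range (n + 1),
          (-1 : ℝ) ^ (n - k) * (n.choose k : ℝ) * ((n + β + k).choose n : ℝ) * x ^ k)) = 0 := by
  have hI := integral_pow_mul_shiftedJacobi_eq_zero β h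
  rw [hI, sum_neg_one_pow_mul_choose_mul_factorial_mul_factorial_eq_zero β h, mul_zero]
  exact ⟨rfl, rfl⟩
end

section
/- For natural numbers alpha, beta, n, the polynomial identity (x-1)^alpha * P_n^{(alpha,beta)}(2x-1) = sum_{i=0}^alpha binom(alpha,i) * (-1)^i * x^(alpha-i) * P_n^{(0,alpha+beta-i)}(2x-1) holds. -/
/-!
Put `f a b = (x - 1) ^ a * P_n^{(a,b)}(2x-1)`. The contiguous relation
`(x - 1) P_n^{(α+1,β)} = x P_n^{(α,β+1)} - P_n^{(α,β)}` says `f (a + 1) = (x E - 1) (f a)`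
for the shift `E : b ↦ b + 1`, so `f α = (x E - 1) ^ α (f 0)`, and expanding by the binomial
theorem gives the identity. The contiguous relation itself follows coefficientwise from Pascal's
rule, through `P_n^{(α+1,β+1)}`.
-/
/-- The shifted Jacobi polynomial `P_n^{(α,β)}(2x-1)` with natural number parameters,
given by `∑_{j=0}^n choose (n+α+β+j) j * choose (n+α) (n-j) * (x-1)^j`
(note `((2x-1)-1)/2 = x-1`). -/
noncomputable def shiftedJacobi (n α β : ℕ) (x : ℚ) : ℚ :=
  ∑ j ∈ Finset.range (n + 1),
    ((n + α + β + j).choose j * (n + α).choose (n - j) : ℚ) * (x - 1) ^ j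

open Finset

theorem eq_sum_choose_of_succ_eq_mul_sub {R : Type*} [CommRing R] (c : R) (f : ℕ → ℕ → R)
    (hf : ∀ a b, f (a + 1) b = c * f a (b + 1) - f a b) (a b : ℕ) :
    f a b = ∑ i ∈ range (a + 1),
      (a.choose i : R) * ((-1) ^ i * c ^ (a - i) * f 0 (b + (a - i))) := by
  induction a generalizing b with
  | zero => simp
  | succ a ih =>
    rw [hf, ih, ih, mul_sum, sum_choose_succ_mul (fun i j ↦ (-1) ^ i * c ^ j * f 0 (b + j)),
      sub_eq_add_neg, ← sum_neg_distrib]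
    congr 1 <;> refine sum_congr rfl fun i hi ↦ ?_
    · rw [Nat.sub_add_comm (mem_range_succ_iff.mp hi), pow_succ, ← add_assoc, add_right_comm b]
      ring
    · ring

theorem shiftedJacobi_zero (α β : ℕ) (x : ℚ) : shiftedJacobi 0 α β x = 1 := by
  simp [shiftedJacobi]

theorem shiftedJacobi_succ_alpha_sub_succ_beta (n α β : ℕ) (x : ℚ) :
    shiftedJacobi (n + 1) (α + 1) β x - shiftedJacobi (n + 1) α (β + 1) x =
      shiftedJacobi n (α + 1) (β + 1) x := by
  rw [shiftedJacobi, shiftedJacobi, ← sum_sub_distrib, sum_range_succ, shiftedJacobi]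
  simp only [Nat.sub_self, Nat.choose_zero_right]
  rw [show n + 1 + (α + 1) + β = n + 1 + α + (β + 1) by ring, sub_self, add_zero]
  refine sum_congr rfl fun j hj ↦ ?_
  rw [show n + 1 + α + (β + 1) + j = n + (α + 1) + (β + 1) + j by ring,
    show n + 1 + (α + 1) = n + (α + 1) + 1 by ring, show n + 1 + α = n + (α + 1) by ring,
    Nat.sub_add_comm (mem_range_succ_iff.mp hj), Nat.choose_succ_succ']
  push_cast
  ring

theorem shiftedJacobi_succ_beta_sub (n α β : ℕ) (x : ℚ) :
    shiftedJacobi (n + 1) α (β + 1) x - shiftedJacobi (n + 1) α β x =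
      (x - 1) * shiftedJacobi n (α + 1) (β + 1) x := by
  rw [shiftedJacobi, shiftedJacobi, ← sum_sub_distrib, sum_range_succ', shiftedJacobi, mul_sum]
  simp only [Nat.choose_zero_right, sub_self, add_zero]
  refine sum_congr rfl fun j _ ↦ ?_
  rw [show n + 1 + α + (β + 1) + (j + 1) = n + (α + 1) + (β + 1) + j + 1 by ring,
    Nat.choose_succ_succ', show n + 1 + α + β + (j + 1) = n + (α + 1) + (β + 1) + j by ring,
    Nat.add_sub_add_right, show n + 1 + α = n + (α + 1) by ring]
  push_cast
  ring

theorem sub_one_mul_shiftedJacobi_succ_alpha (n α β : ℕ) (x : ℚ) :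
    (x - 1) * shiftedJacobi n (α + 1) β x =
      x * shiftedJacobi n α (β + 1) x - shiftedJacobi n α β x := by
  cases n with
  | zero => simp only [shiftedJacobi_zero]; ring
  | succ n =>
    linear_combination (x - 1) * shiftedJacobi_succ_alpha_sub_succ_beta n α β x
      - shiftedJacobi_succ_beta_sub n α β x

/-- for natural numbers `α, β, n`,
`(x-1)^α * P_n^{(α,β)}(2x-1)
  = ∑_{i=0}^α choose α i * (-1)^i * x^(α-i) * P_n^{(0,α+β-i)}(2x-1)`. -/
theorem shifted_jacobi_decomposition (n α β : ℕ) (x : ℚ) :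
    (x - 1) ^ α * shiftedJacobi n α β x =
      ∑ i ∈ Finset.range (α + 1),
        (α.choose i : ℚ) * (-1) ^ i * x ^ (α - i) * shiftedJacobi n 0 (α + β - i) x := by
  have hrec : ∀ a b, (x - 1) ^ (a + 1) * shiftedJacobi n (a + 1) b x =
      x * ((x - 1) ^ a * shiftedJacobi n a (b + 1) x) - (x - 1) ^ a * shiftedJacobi n a b x := by
    intro a b
    linear_combination (x - 1) ^ a * sub_one_mul_shiftedJacobi_succ_alpha n a b x
  rw [eq_sum_choose_of_succ_eq_mul_sub x
    (fun a b ↦ (x - 1) ^ a * shiftedJacobi n a b x) hrec α β]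
  refine sum_congr rfl fun i hi ↦ ?_
  rw [pow_zero, one_mul, ← Nat.add_sub_assoc (mem_range_succ_iff.mp hi), add_comm β]
  ring
end
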